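/- Let F be a free group with quotient map π: F → F/[R,F], and suppose R is the normal closure of a set S ⊆ F such that S = S_0 ∪ S_1 with S_0 ⊆ F' and the images {π(s) : s ∈ S_1} generating a free abelian complement to (R∩F')/[R,F] in R/[R,F]. Then (R∩F')/[R,F] is generated by {π(s) : s ∈ S_0}. -/

import Mathlib

/-!
Everything takes place in `R/[R,F]`, which is central in `F/[R,F]`. Hence the normal closure of
`π(S)` is just the subgroup generated by `π(S)`, so `R/[R,F] = ⟨π(S₀)⟩ ⊔ ⟨π(S₁)⟩` with
`⟨π(S₀)⟩ ≤ (R∩F')/[R,F]`. The modular law then gives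
`(R∩F')/[R,F] = ⟨π(S₀)⟩ ⊔ ((R∩F')/[R,F] ⊓ ⟨π(S₁)⟩) = ⟨π(S₀)⟩`.
-/

open scoped Pointwise

namespace Subgroup

variable {G : Type*} [Group G]

theorem normal_of_le_center {H : Subgroup G} (h : H ≤ center G) : H.Normal :=
  ⟨fun a ha g => by rwa [mem_center_iff.mp (h ha) g, mul_inv_cancel_right]⟩

theorem normalClosure_eq_closure_of_subset_center {s : Set G} (hs : s ⊆ center G) :
    normalClosure s = closure s :=
  haveI := normal_of_le_center (closure_le _ |>.mpr hs)
  le_antisymm (normalClosure_le_normal subset_closure)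
    (closure_le _ |>.mpr subset_normalClosure)

theorem map_mk'_le_center_of_commutator_le {H N : Subgroup G} [N.Normal] (h : ⁅H, ⊤⁆ ≤ N) :
    H.map (QuotientGroup.mk' N) ≤ center (G ⧸ N) := by
  rw [← commutator_top_right_eq_bot_iff_le_center,
    ← map_top_of_surjective _ (QuotientGroup.mk'_surjective N), ← map_commutator,
    map_eq_bot_iff, QuotientGroup.ker_mk']
  exact h

theorem eq_of_le_sup_of_inf_eq_bot {A B C : Subgroup G} [C.Normal] (hCA : C ≤ A)
    (hA : A ≤ C ⊔ B) (hAB : A ⊓ B = ⊥) : A = C := by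
  refine le_antisymm (fun a ha => ?_) hCA
  have : a ∈ (C : Set G) * ↑(B ⊓ A) := by
    rw [mul_inf_assoc C B A hCA, ← normal_mul]
    exact ⟨hA ha, ha⟩
  simpa [inf_comm, hAB] using this

end Subgroup

theorem schur_stmt16_general (n : ℕ) (S S0 S1 : Set (FreeGroup (Fin n)))
    (hS : S = S0 ∪ S1)
    (R : Subgroup (FreeGroup (Fin n))) [R.Normal]
    (hR : R = Subgroup.normalClosure S)
    (hS0 : S0 ⊆ ↑(commutator (FreeGroup (Fin n))))
    (hinf : ((R ⊓ commutator (FreeGroup (Fin n))).map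
          (QuotientGroup.mk' ⁅R, (⊤ : Subgroup (FreeGroup (Fin n)))⁆)) ⊓
        Subgroup.closure ((QuotientGroup.mk' ⁅R, (⊤ : Subgroup (FreeGroup (Fin n)))⁆) '' S1) = ⊥) :
    (R ⊓ commutator (FreeGroup (Fin n))).map
        (QuotientGroup.mk' ⁅R, (⊤ : Subgroup (FreeGroup (Fin n)))⁆) =
      Subgroup.closure ((QuotientGroup.mk' ⁅R, (⊤ : Subgroup (FreeGroup (Fin n)))⁆) '' S0) := by
  set π := QuotientGroup.mk' ⁅R, (⊤ : Subgroup (FreeGroup (Fin n)))⁆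
  have hcentral : R.map π ≤ Subgroup.center _ :=
    Subgroup.map_mk'_le_center_of_commutator_le le_rfl
  have hSR : S ⊆ R := hR ▸ Subgroup.subset_normalClosure
  have hS0A : Subgroup.closure (π '' S0) ≤ (R ⊓ commutator _).map π :=
    Subgroup.closure_le _ |>.mpr <|
      Set.image_mono fun s hs => ⟨hSR (hS ▸ Or.inl hs), hS0 hs⟩
  have hRS : R.map π = Subgroup.closure (π '' S0) ⊔ Subgroup.closure (π '' S1) := by
    rw [congrArg (Subgroup.map π) hR,
      Subgroup.map_normalClosure _ _ (QuotientGroup.mk'_surjective _),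
      Subgroup.normalClosure_eq_closure_of_subset_center, hS, Set.image_union,
      Subgroup.closure_union]
    exact (Set.image_mono hSR).trans hcentral
  have hAR : (R ⊓ commutator _).map π ≤ R.map π := Subgroup.map_mono inf_le_left
  have := Subgroup.normal_of_le_center (hS0A.trans (hAR.trans hcentral))
  exact Subgroup.eq_of_le_sup_of_inf_eq_bot hS0A (hRS ▸ hAR) hinf

/-- If `R` is the normal closure of `S = S₀ ∪ S₁` with `S₀ ⊆ F'` and the images of `S₁`
generate a free abelian complement to `(R∩F')/[R,F]` in `R/[R,F]`, then `(R∩F')/[R,F]`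
is generated by the images of `S₀`. -/
theorem schur_stmt16 (n : ℕ) (S S0 S1 : Set (FreeGroup (Fin n)))
    (hS : S = S0 ∪ S1)
    (R : Subgroup (FreeGroup (Fin n))) [R.Normal]
    (hR : R = Subgroup.normalClosure S)
    (hS0 : S0 ⊆ ↑(commutator (FreeGroup (Fin n))))
    (hsup : ((R ⊓ commutator (FreeGroup (Fin n))).map
          (QuotientGroup.mk' ⁅R, (⊤ : Subgroup (FreeGroup (Fin n)))⁆)) ⊔
        Subgroup.closure ((QuotientGroup.mk' ⁅R, (⊤ : Subgroup (FreeGroup (Fin n)))⁆) '' S1) =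
        R.map (QuotientGroup.mk' ⁅R, (⊤ : Subgroup (FreeGroup (Fin n)))⁆))
    (hinf : ((R ⊓ commutator (FreeGroup (Fin n))).map
          (QuotientGroup.mk' ⁅R, (⊤ : Subgroup (FreeGroup (Fin n)))⁆)) ⊓
        Subgroup.closure ((QuotientGroup.mk' ⁅R, (⊤ : Subgroup (FreeGroup (Fin n)))⁆) '' S1) = ⊥)
    (hfree : ∃ ι : Type, Nonempty
        (↥(Subgroup.closure ((QuotientGroup.mk' ⁅R, (⊤ : Subgroup (FreeGroup (Fin n)))⁆) '' S1)) ≃*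
          Multiplicative (ι →₀ ℤ))) :
    (R ⊓ commutator (FreeGroup (Fin n))).map
        (QuotientGroup.mk' ⁅R, (⊤ : Subgroup (FreeGroup (Fin n)))⁆) =
      Subgroup.closure ((QuotientGroup.mk' ⁅R, (⊤ : Subgroup (FreeGroup (Fin n)))⁆) '' S0) :=
  schur_stmt16_general n S S0 S1 hS R hR hS0 hinf
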